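/- arXiv:2507.13426 — 4 statements merged into one kernel-verified Lean document; each statement's English description precedes it below -/
import Mathlib

section
/- Let η : ℝ → ℝ be positive and strictly increasing on an interval [a,b], and let w1, w2 be probability density functions on [a,b] that are strictly positive on [a,b] and such that w1 dominates w2 in the monotone likelihood ratio sense (for all μ > μ' in [a,b], w1(μ)/w1(μ') > w2(μ)/w2(μ')). Then ∫ η(μ) w1(μ) dμ > ∫ η(μ) w2(μ) dμ. -/
open MeasureTheory

/-- MLR dominance implies higher mean of a positive strictly increasing function. -/
theorem mlr_integral_gt (a b : ℝ) (hab : a < b) (η w1 w2 : ℝ → ℝ)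
    (hη_pos : ∀ μ ∈ Set.Icc a b, 0 < η μ)
    (hη_mono : StrictMonoOn η (Set.Icc a b))
    (hw1c : ContinuousOn w1 (Set.Icc a b))
    (hw2c : ContinuousOn w2 (Set.Icc a b))
    (hw1pos : ∀ μ ∈ Set.Icc a b, 0 < w1 μ)
    (hw2pos : ∀ μ ∈ Set.Icc a b, 0 < w2 μ)
    (hw1int : ∫ x in a..b, w1 x = 1)
    (hw2int : ∫ x in a..b, w2 x = 1)
    (hMLR : ∀ μ' ∈ Set.Icc a b, ∀ μ ∈ Set.Icc a b, μ' < μ →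
      w1 μ * w2 μ' > w2 μ * w1 μ') :
    (∫ x in a..b, η x * w1 x) > ∫ x in a..b, η x * w2 x := by
  have hicc : Set.uIcc a b = Set.Icc a b := Set.uIcc_of_le hab.le
  have hηint : IntervalIntegrable η volume a b := by
    apply MonotoneOn.intervalIntegrable
    rw [hicc]; exact hη_mono.monotoneOn
  have hw1i : IntervalIntegrable w1 volume a b := by
    apply ContinuousOn.intervalIntegrable; rw [hicc]; exact hw1c
  have hw2i : IntervalIntegrable w2 volume a b := by
    apply ContinuousOn.intervalIntegrable; rw [hicc]; exact hw2c
  have hc1 : ContinuousOn w1 (Set.uIcc a b) := hicc ▸ hw1c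
  have hc2 : ContinuousOn w2 (Set.uIcc a b) := hicc ▸ hw2c
  have hηw1 : IntervalIntegrable (fun x => η x * w1 x) volume a b :=
    hηint.mul_continuousOn hc1
  have hηw2 : IntervalIntegrable (fun x => η x * w2 x) volume a b :=
    hηint.mul_continuousOn hc2
  -- abbreviations
  -- key linearity computation
  have key : ∀ c1 c2 c3 c4 : ℝ,
      ∫ y in a..b, (c1 * w2 y - c2 * w1 y - c3 * (η y * w2 y) + c4 * (η y * w1 y))
        = c1 - c2 - c3 * (∫ x in a..b, η x * w2 x) + c4 * (∫ x in a..b, η x * w1 x) := by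
    intro c1 c2 c3 c4
    have h1 := hw2i.const_mul c1
    have h2 := hw1i.const_mul c2
    have h3 := hηw2.const_mul c3
    have h4 := hηw1.const_mul c4
    rw [intervalIntegral.integral_add ((h1.sub h2).sub h3) h4,
      intervalIntegral.integral_sub (h1.sub h2) h3,
      intervalIntegral.integral_sub h1 h2,
      intervalIntegral.integral_const_mul, intervalIntegral.integral_const_mul,
      intervalIntegral.integral_const_mul, intervalIntegral.integral_const_mul,
      hw1int, hw2int]
    ring
  -- the symmetrized integrand
  have hGint : ∀ x : ℝ,
      IntervalIntegrable (fun y => (η x - η y) * (w1 x * w2 y - w2 x * w1 y)) volume a b := by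
    intro x
    have heq : (fun y => (η x - η y) * (w1 x * w2 y - w2 x * w1 y))
        = fun y => (η x * w1 x) * w2 y - (η x * w2 x) * w1 y
            - (w1 x) * (η y * w2 y) + (w2 x) * (η y * w1 y) := by
      funext y; ring
    rw [heq]
    exact (((hw2i.const_mul _).sub (hw1i.const_mul _)).sub (hηw2.const_mul _)).add
      (hηw1.const_mul _)
  have hGeq : ∀ x : ℝ,
      (∫ y in a..b, (η x - η y) * (w1 x * w2 y - w2 x * w1 y))
        = η x * w1 x - η x * w2 x - w1 x * (∫ x in a..b, η x * w2 x)
            + w2 x * (∫ x in a..b, η x * w1 x) := by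
    intro x
    have heq : (fun y => (η x - η y) * (w1 x * w2 y - w2 x * w1 y))
        = fun y => (η x * w1 x) * w2 y - (η x * w2 x) * w1 y
            - (w1 x) * (η y * w2 y) + (w2 x) * (η y * w1 y) := by
      funext y; ring
    rw [intervalIntegral.integral_congr (g := fun y => (η x * w1 x) * w2 y
      - (η x * w2 x) * w1 y - (w1 x) * (η y * w2 y) + (w2 x) * (η y * w1 y))
      (fun y _ => by ring), key]
  -- pointwise positivity of the symmetrized integrand
  have hGpos : ∀ x ∈ Set.Icc a b, ∀ y ∈ Set.Icc a b, y ≠ x →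
      0 < (η x - η y) * (w1 x * w2 y - w2 x * w1 y) := by
    intro x hx y hy hne
    rcases lt_or_gt_of_ne hne with h | h
    · exact mul_pos (sub_pos.mpr (hη_mono hy hx h)) (sub_pos.mpr (hMLR y hy x hx h))
    · exact mul_pos_of_neg_of_neg (sub_neg.mpr (hη_mono hx hy h))
        (sub_neg.mpr (by linarith [hMLR x hx y hy h, mul_comm (w1 y) (w2 x), mul_comm (w2 y) (w1 x)]))
  -- inner integral is positive for x in the interior
  have hinner_pos : ∀ x ∈ Set.Ioo a b,
      0 < ∫ y in a..b, (η x - η y) * (w1 x * w2 y - w2 x * w1 y) := by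
    intro x hx
    have hx' : x ∈ Set.Icc a b := Set.Ioo_subset_Icc_self hx
    have hxu : x ∈ Set.uIcc a b := hicc ▸ hx'
    have h1 : IntervalIntegrable (fun y => (η x - η y) * (w1 x * w2 y - w2 x * w1 y))
        volume a x := (hGint x).mono_set (Set.uIcc_subset_uIcc Set.left_mem_uIcc hxu)
    have h2 : IntervalIntegrable (fun y => (η x - η y) * (w1 x * w2 y - w2 x * w1 y))
        volume x b := (hGint x).mono_set (Set.uIcc_subset_uIcc hxu Set.right_mem_uIcc)
    have p1 : 0 < ∫ y in a..x, (η x - η y) * (w1 x * w2 y - w2 x * w1 y) :=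
      intervalIntegral.intervalIntegral_pos_of_pos_on h1
        (fun y hy => hGpos x hx' y ⟨hy.1.le, hy.2.le.trans hx.2.le⟩ hy.2.ne) hx.1
    have p2 : 0 < ∫ y in x..b, (η x - η y) * (w1 x * w2 y - w2 x * w1 y) :=
      intervalIntegral.intervalIntegral_pos_of_pos_on h2
        (fun y hy => hGpos x hx' y ⟨hx.1.le.trans hy.1.le, hy.2.le⟩ hy.1.ne') hx.2
    rw [← intervalIntegral.integral_add_adjacent_intervals h1 h2]
    linarith
  -- the closed-form of the inner integral is positive on the interior
  have hpos : ∀ x ∈ Set.Ioo a b,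
      0 < η x * w1 x - η x * w2 x - w1 x * (∫ x in a..b, η x * w2 x)
        + w2 x * (∫ x in a..b, η x * w1 x) := by
    intro x hx
    have := hinner_pos x hx
    rwa [hGeq x] at this
  -- integrability of the closed form
  have hh : IntervalIntegrable (fun x => η x * w1 x - η x * w2 x
      - w1 x * (∫ x in a..b, η x * w2 x) + w2 x * (∫ x in a..b, η x * w1 x)) volume a b :=
    ((hηw1.sub hηw2).sub (hw1i.mul_const _)).add (hw2i.mul_const _)
  have hfinal : 0 < ∫ x in a..b, (η x * w1 x - η x * w2 x
      - w1 x * (∫ x in a..b, η x * w2 x) + w2 x * (∫ x in a..b, η x * w1 x)) :=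
    intervalIntegral.intervalIntegral_pos_of_pos_on hh hpos hab
  rw [intervalIntegral.integral_add ((hηw1.sub hηw2).sub (hw1i.mul_const _))
      (hw2i.mul_const _),
    intervalIntegral.integral_sub (hηw1.sub hηw2) (hw1i.mul_const _),
    intervalIntegral.integral_sub hηw1 hηw2,
    intervalIntegral.integral_mul_const, intervalIntegral.integral_mul_const,
    hw1int, hw2int] at hfinal
  linarith
end

section
/- In the two-product logit model, if γ1 < 0 and μ > μ', then the fraction of inside purchasers choosing product 1 is strictly larger for type μ: s_1|μ / (s_1|μ + s_2|μ) > s_1|μ' / (s_1|μ' + s_2|μ'). Equivalently, the three-way MLR-type comparison s_1|μ / s_1|μ' > (s_1|μ + s_2|μ)/(s_1|μ' + s_2|μ') > s_2|μ / s_2|μ' holds. -/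
/-- Conditional logit share of product 1 (type μ). -/
noncomputable def s1 (a b γ0 γ1 p1 p2 μ : ℝ) : ℝ :=
  Real.exp (a - b * p1 + μ) /
    (1 + Real.exp (a - b * p1 + μ) + Real.exp (a - b * p2 + γ0 + γ1 * μ + μ))

/-- Conditional logit share of product 2 (type μ). -/
noncomputable def s2 (a b γ0 γ1 p1 p2 μ : ℝ) : ℝ :=
  Real.exp (a - b * p2 + γ0 + γ1 * μ + μ) /
    (1 + Real.exp (a - b * p1 + μ) + Real.exp (a - b * p2 + γ0 + γ1 * μ + μ))

/-!
Both shares of a type have the same denominator `D(μ)`, so it cancels from the inside composition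
`s₁ / (s₁ + s₂) = e^{v₁} / (e^{v₁} + e^{v₂})` and contributes the same positive factor
`D(μ') / D(μ)` to each of the three ratios of the MLR chain. What remains is governed by
`e^{v₂(μ)} / e^{v₁(μ)} = e^{const + γ₁ μ}`, which strictly decreases in `μ` when `γ₁ < 0`;
given that cross inequality, the chain is the mediant inequality.
-/

section Mediant

variable {K : Type*} [Field K] [LinearOrder K] [IsStrictOrderedRing K] {x y x' y' : K}

lemma add_div_add_lt_div (hx' : 0 < x') (hy' : 0 < y') (h : x' * y < x * y') :
    (x + y) / (x' + y') < x / x' := by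
  rw [div_lt_div_iff₀ (by positivity) hx']
  linarith

lemma div_lt_add_div_add (hx' : 0 < x') (hy' : 0 < y') (h : x' * y < x * y') :
    y / y' < (x + y) / (x' + y') := by
  rw [div_lt_div_iff₀ hy' (by positivity)]
  linarith

lemma div_add_lt_div_add (hx : 0 < x) (hy : 0 < y) (hx' : 0 < x') (hy' : 0 < y')
    (h : x' * y < x * y') : x' / (x' + y') < x / (x + y) := by
  rw [div_lt_div_iff₀ (by positivity) (by positivity)]
  linarith

end Mediant

section CommonDenominator

variable {K : Type*} [Field K] {x y x' D D' : K}

lemma div_div_add_div_same (hD : D ≠ 0) : x / D / (x / D + y / D) = x / (x + y) := by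
  rw [← add_div, div_div_div_cancel_right₀ hD]

lemma div_div_div_eq_div_mul_div : x / D / (x' / D') = x / x' * (D' / D) := by
  rw [div_div_div_eq, mul_comm D x', mul_div_mul_comm]

end CommonDenominator

lemma share_ratios_of_cross_lt {K : Type*} [Field K] [LinearOrder K] [IsStrictOrderedRing K]
    {A B A' B' D D' : K} (hA : 0 < A) (hB : 0 < B) (hA' : 0 < A') (hB' : 0 < B')
    (hD : 0 < D) (hD' : 0 < D') (h : A' * B < A * B') :
    A / D / (A / D + B / D) > A' / D' / (A' / D' + B' / D') ∧
    A / D / (A' / D') > (A / D + B / D) / (A' / D' + B' / D') ∧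
    (A / D + B / D) / (A' / D' + B' / D') > B / D / (B' / D') := by
  have hc : 0 < D' / D := div_pos hD' hD
  refine ⟨?_, ?_, ?_⟩
  · rw [div_div_add_div_same hD.ne', div_div_add_div_same hD'.ne']
    exact div_add_lt_div_add hA hB hA' hB' h
  · simp only [← add_div, div_div_div_eq_div_mul_div]
    exact mul_lt_mul_of_pos_right (add_div_add_lt_div hA' hB' h) hc
  · simp only [← add_div, div_div_div_eq_div_mul_div]
    exact mul_lt_mul_of_pos_right (div_lt_add_div_add hA' hB' h) hc

open Real in
lemma logit_weights_cross_lt {a b γ0 γ1 p1 p2 μ μ' : ℝ} (hγ1 : γ1 < 0) (hμ : μ' < μ) :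
    exp (a - b * p1 + μ') * exp (a - b * p2 + γ0 + γ1 * μ + μ) <
      exp (a - b * p1 + μ) * exp (a - b * p2 + γ0 + γ1 * μ' + μ') := by
  rw [← exp_add, ← exp_add, exp_lt_exp]
  linarith [mul_lt_mul_of_neg_left hμ hγ1]

theorem inside_composition_mlr_general (a b γ0 γ1 p1 p2 μ μ' : ℝ)
    (hγ1 : γ1 < 0) (hμ : μ' < μ) :
    (s1 a b γ0 γ1 p1 p2 μ / (s1 a b γ0 γ1 p1 p2 μ + s2 a b γ0 γ1 p1 p2 μ)
      > s1 a b γ0 γ1 p1 p2 μ' / (s1 a b γ0 γ1 p1 p2 μ' + s2 a b γ0 γ1 p1 p2 μ')) ∧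
    (s1 a b γ0 γ1 p1 p2 μ / s1 a b γ0 γ1 p1 p2 μ'
      > (s1 a b γ0 γ1 p1 p2 μ + s2 a b γ0 γ1 p1 p2 μ)
          / (s1 a b γ0 γ1 p1 p2 μ' + s2 a b γ0 γ1 p1 p2 μ')) ∧
    ((s1 a b γ0 γ1 p1 p2 μ + s2 a b γ0 γ1 p1 p2 μ)
          / (s1 a b γ0 γ1 p1 p2 μ' + s2 a b γ0 γ1 p1 p2 μ')
      > s2 a b γ0 γ1 p1 p2 μ / s2 a b γ0 γ1 p1 p2 μ') := by
  unfold s1 s2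
  exact share_ratios_of_cross_lt (Real.exp_pos _) (Real.exp_pos _) (Real.exp_pos _)
    (Real.exp_pos _) (by positivity) (by positivity) (logit_weights_cross_lt hγ1 hμ)

/-- If `γ1 < 0`, higher types have a larger fraction of inside purchasers choosing
product 1, and the three-way MLR comparison holds. -/
theorem inside_composition_mlr (a b γ0 γ1 p1 p2 μ μ' : ℝ)
    (hb : 0 < b) (hγ1 : γ1 < 0) (hμ : μ' < μ) :
    (s1 a b γ0 γ1 p1 p2 μ / (s1 a b γ0 γ1 p1 p2 μ + s2 a b γ0 γ1 p1 p2 μ)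
      > s1 a b γ0 γ1 p1 p2 μ' / (s1 a b γ0 γ1 p1 p2 μ' + s2 a b γ0 γ1 p1 p2 μ')) ∧
    (s1 a b γ0 γ1 p1 p2 μ / s1 a b γ0 γ1 p1 p2 μ'
      > (s1 a b γ0 γ1 p1 p2 μ + s2 a b γ0 γ1 p1 p2 μ)
          / (s1 a b γ0 γ1 p1 p2 μ' + s2 a b γ0 γ1 p1 p2 μ')) ∧
    ((s1 a b γ0 γ1 p1 p2 μ + s2 a b γ0 γ1 p1 p2 μ)
          / (s1 a b γ0 γ1 p1 p2 μ' + s2 a b γ0 γ1 p1 p2 μ')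
      > s2 a b γ0 γ1 p1 p2 μ / s2 a b γ0 γ1 p1 p2 μ') :=
  inside_composition_mlr_general a b γ0 γ1 p1 p2 μ μ' hγ1 hμ
end

section
/- Fix b > 0 and r > 0, and define for each type μ the total inside share at price shift t by s_μ(t) = Σ_k exp(v_k(μ) − b·t) / (1 + Σ_k exp(v_k(μ) − b·t)) over k ∈ {1,2}. Then s_μ(r)/s_μ(0) = (1 + Σ_k exp(v_k(μ))) / (exp(b·r) + Σ_k exp(v_k(μ))), and this ratio is strictly increasing in Σ_k exp(v_k(μ)). Consequently, if v_k(μ) > v_k(μ') for both k (e.g., when μ > μ' and |γ1| < 1), then s_μ(r)/s_μ(0) > s_μ'(r)/s_μ'(0). -/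
/-!
Writing `S = exp v₁ + exp v₂`, a uniform price shift `t` divides every inside weight by
`exp (b t)`, so the total inside share is `S / (exp (b t) + S)`. The factor `S` cancels in the
ratio of shares, leaving `(1 + S) / (exp (b r) + S)`, and `y ↦ (1 + y) / (c + y)` is strictly
increasing on `y > -c` when `c > 1`: cross-multiplying reduces the comparison at `y < x` to
`(c - 1) (x - y) > 0`.
-/

/-- Mean utility of product 1. -/
noncomputable def v1 (a b p1 μ : ℝ) : ℝ := a - b * p1 + μ

/-- Mean utility of product 2. -/
noncomputable def v2 (a b γ0 γ1 p2 μ : ℝ) : ℝ := a - b * p2 + γ0 + (1 + γ1) * μ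

/-- Total inside share of type μ under a uniform price shift t. -/
noncomputable def stot (a b γ0 γ1 p1 p2 t μ : ℝ) : ℝ :=
  (Real.exp (v1 a b p1 μ - b * t) + Real.exp (v2 a b γ0 γ1 p2 μ - b * t)) /
    (1 + Real.exp (v1 a b p1 μ - b * t) + Real.exp (v2 a b γ0 γ1 p2 μ - b * t))

open Real Set

lemma stot_eq (a b γ0 γ1 p1 p2 t μ : ℝ) :
    stot a b γ0 γ1 p1 p2 t μ =
      (exp (v1 a b p1 μ) + exp (v2 a b γ0 γ1 p2 μ)) /
        (exp (b * t) + (exp (v1 a b p1 μ) + exp (v2 a b γ0 γ1 p2 μ))) := by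
  have := exp_pos (b * t)
  rw [stot, exp_sub, exp_sub]
  field_simp
  ring

lemma stot_div_stot_zero (a b γ0 γ1 p1 p2 r μ : ℝ) :
    stot a b γ0 γ1 p1 p2 r μ / stot a b γ0 γ1 p1 p2 0 μ
      = (1 + (exp (v1 a b p1 μ) + exp (v2 a b γ0 γ1 p2 μ)))
        / (exp (b * r) + (exp (v1 a b p1 μ) + exp (v2 a b γ0 γ1 p2 μ))) := by
  rw [stot_eq, stot_eq, mul_zero, exp_zero]
  exact div_div_div_cancel_left' _ _ (by positivity)

lemma strictMonoOn_one_add_div_add {c : ℝ} (hc : 1 < c) :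
    StrictMonoOn (fun y => (1 + y) / (c + y)) (Ioi (-c)) := by
  intro y hy x hx hyx
  simp only [mem_Ioi] at hx hy
  rw [div_lt_div_iff₀ (by linarith) (by linarith)]
  nlinarith

/-- Ratio formula for the total inside share under a uniform price shift,
its monotonicity in the sum of exponentiated utilities, and the comparison
across types. -/
theorem total_share_ratio (a b γ0 γ1 p1 p2 r : ℝ) (hb : 0 < b) (hr : 0 < r) :
    (∀ μ : ℝ, stot a b γ0 γ1 p1 p2 r μ / stot a b γ0 γ1 p1 p2 0 μ
      = (1 + (Real.exp (v1 a b p1 μ) + Real.exp (v2 a b γ0 γ1 p2 μ)))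
        / (Real.exp (b * r) + (Real.exp (v1 a b p1 μ) + Real.exp (v2 a b γ0 γ1 p2 μ)))) ∧
    (∀ x y : ℝ, 0 < y → y < x →
      (1 + y) / (Real.exp (b * r) + y) < (1 + x) / (Real.exp (b * r) + x)) ∧
    (∀ μ μ' : ℝ, v1 a b p1 μ' < v1 a b p1 μ → v2 a b γ0 γ1 p2 μ' < v2 a b γ0 γ1 p2 μ →
      stot a b γ0 γ1 p1 p2 r μ' / stot a b γ0 γ1 p1 p2 0 μ'
        < stot a b γ0 γ1 p1 p2 r μ / stot a b γ0 γ1 p1 p2 0 μ) := by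
  have hmono := strictMonoOn_one_add_div_add (one_lt_exp_iff.mpr (mul_pos hb hr))
  have hmem : ∀ y : ℝ, 0 < y → y ∈ Ioi (-exp (b * r)) := fun y hy =>
    mem_Ioi.mpr (by linarith [exp_pos (b * r)])
  refine ⟨stot_div_stot_zero a b γ0 γ1 p1 p2 r,
    fun x y hy hyx => hmono (hmem y hy) (hmem x (hy.trans hyx)) hyx, ?_⟩
  intro μ μ' h1 h2
  rw [stot_div_stot_zero, stot_div_stot_zero]
  exact hmono (hmem _ (by positivity)) (hmem _ (by positivity))
    (add_lt_add (exp_lt_exp.mpr h1) (exp_lt_exp.mpr h2))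
end

section
/- Consider the mixed logit model where the population distribution of types μ has a strictly positive atomless density f on a compact interval, and aggregate shares at uniform price shift r are S_k(r) = ∫ s_k|μ(r) f(μ) dμ. If γ1 < 0 (so that η(μ) = s_1|μ/(s_1|μ + s_2|μ) is strictly increasing in μ and independent of r) and |γ1| < 1, then for any r > 0 (uniform price increase), S_1(r)/(S_1(r)+S_2(r)) > S_1(0)/(S_1(0)+S_2(0)); equivalently S_1(r)·S_2(0) > S_1(0)·S_2(r). -/
open MeasureTheory

/-- Conditional logit share of product 1 at uniform price shift r. -/
noncomputable def s1r (a b γ0 γ1 p1 p2 r μ : ℝ) : ℝ :=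
  Real.exp (a - b * p1 + μ - b * r) /
    (1 + Real.exp (a - b * p1 + μ - b * r)
       + Real.exp (a - b * p2 + γ0 + (1 + γ1) * μ - b * r))

/-- Conditional logit share of product 2 at uniform price shift r. -/
noncomputable def s2r (a b γ0 γ1 p1 p2 r μ : ℝ) : ℝ :=
  Real.exp (a - b * p2 + γ0 + (1 + γ1) * μ - b * r) /
    (1 + Real.exp (a - b * p1 + μ - b * r)
       + Real.exp (a - b * p2 + γ0 + (1 + γ1) * μ - b * r))

lemma alg_id (P Q R S t dx dy ex ey : ℝ) (hdx : dx ≠ 0) (hdy : dy ≠ 0)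
    (hex : ex ≠ 0) (hey : ey ≠ 0) :
    P * t / dx * (S / ey) - P / ex * (S * t / dy)
      + Q * t / dy * (R / ex) - Q / ey * (R * t / dx)
    = t * (ex * dy - dx * ey) * (P * S - Q * R) / (dx * (dy * (ex * ey))) := by
  field_simp
  ring

lemma ksym_pos (a b γ0 γ1 p1 p2 r x y : ℝ) (hb : 0 < b) (hγ1 : -1 < γ1)
    (hγ1' : γ1 < 0) (hr : 0 < r) (hxy : x < y) :
    0 < s1r a b γ0 γ1 p1 p2 r x * s2r a b γ0 γ1 p1 p2 0 y
      - s1r a b γ0 γ1 p1 p2 0 x * s2r a b γ0 γ1 p1 p2 r y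
      + s1r a b γ0 γ1 p1 p2 r y * s2r a b γ0 γ1 p1 p2 0 x
      - s1r a b γ0 γ1 p1 p2 0 y * s2r a b γ0 γ1 p1 p2 r x := by
  have hA : ∀ z w : ℝ, Real.exp (a - b*p1 + z - b*w)
      = Real.exp (a - b*p1 + z) * Real.exp (-(b*w)) := by
    intro z w
    rw [show a - b*p1 + z - b*w = (a - b*p1 + z) + (-(b*w)) by ring, Real.exp_add]
  have hB : ∀ z w : ℝ, Real.exp (a - b*p2 + γ0 + (1+γ1)*z - b*w)
      = Real.exp (a - b*p2 + γ0 + (1+γ1)*z) * Real.exp (-(b*w)) := by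
    intro z w
    rw [show a - b*p2 + γ0 + (1+γ1)*z - b*w = (a - b*p2 + γ0 + (1+γ1)*z) + (-(b*w)) by ring, Real.exp_add]
  simp only [s1r, s2r, hA, hB, mul_zero, sub_zero, neg_zero, Real.exp_zero, mul_one]
  set t := Real.exp (-(b*r)) with ht
  set Ax := Real.exp (a - b*p1 + x) with hAx
  set Ay := Real.exp (a - b*p1 + y) with hAy
  set Bx := Real.exp (a - b*p2 + γ0 + (1+γ1)*x) with hBx
  set By := Real.exp (a - b*p2 + γ0 + (1+γ1)*y) with hBy
  have hAxp : 0 < Ax := by rw [hAx]; positivity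
  have hAyp : 0 < Ay := by rw [hAy]; positivity
  have hBxp : 0 < Bx := by rw [hBx]; positivity
  have hByp : 0 < By := by rw [hBy]; positivity
  have htpos : 0 < t := by rw [ht]; positivity
  have ht1 : t < 1 := by
    rw [ht]; exact Real.exp_lt_one_iff.mpr (by nlinarith)
  have hAxy : Ax < Ay := by
    rw [hAx, hAy]; exact Real.exp_lt_exp.mpr (by linarith)
  have hBxy : Bx < By := by
    rw [hBx, hBy]; exact Real.exp_lt_exp.mpr (by nlinarith)
  have hcross : Ax * By < Ay * Bx := by
    rw [hAx, hAy, hBx, hBy, ← Real.exp_add, ← Real.exp_add]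
    exact Real.exp_lt_exp.mpr (by nlinarith [mul_lt_mul_of_neg_left hxy hγ1'])
  have d1 : (0:ℝ) < 1 + Ax * t + Bx * t := by positivity
  have d2 : (0:ℝ) < 1 + Ay * t + By * t := by positivity
  have d3 : (0:ℝ) < 1 + Ax + Bx := by positivity
  have d4 : (0:ℝ) < 1 + Ay + By := by positivity
  rw [alg_id Ax Ay Bx By t _ _ _ _ d1.ne' d2.ne' d3.ne' d4.ne']
  apply div_pos
  · have hfact : (1 + Ax + Bx) * (1 + Ay * t + By * t) - (1 + Ax * t + Bx * t) * (1 + Ay + By)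
        = (1 - t) * ((Ax + Bx) - (Ay + By)) := by ring
    rw [hfact]
    have h1 : (0:ℝ) < (1 - t) * (((Ax + Bx) - (Ay + By)) * (Ax * By - Ay * Bx)) := by
      apply mul_pos (by linarith)
      exact mul_pos_of_neg_of_neg (by linarith) (by linarith)
    nlinarith
  · positivity

lemma s1r_cont (a b γ0 γ1 p1 p2 t : ℝ) :
    Continuous (fun μ => s1r a b γ0 γ1 p1 p2 t μ) := by
  unfold s1r
  apply Continuous.div
  · fun_prop
  · fun_prop
  · intro μ; positivity

lemma s2r_cont (a b γ0 γ1 p1 p2 t : ℝ) :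
    Continuous (fun μ => s2r a b γ0 γ1 p1 p2 t μ) := by
  unfold s2r
  apply Continuous.div
  · fun_prop
  · fun_prop
  · intro μ; positivity

lemma integral_combo {p q u v : ℝ → ℝ} {c1 c2 c3 c4 lo hi : ℝ}
    (hp : IntervalIntegrable p volume lo hi) (hq : IntervalIntegrable q volume lo hi)
    (hu : IntervalIntegrable u volume lo hi) (hv : IntervalIntegrable v volume lo hi) :
    ∫ x in lo..hi, (c1 * p x - c2 * q x + c3 * u x - c4 * v x)
      = c1 * (∫ x in lo..hi, p x) - c2 * (∫ x in lo..hi, q x)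
        + c3 * (∫ x in lo..hi, u x) - c4 * (∫ x in lo..hi, v x) := by
  have h1 := hp.const_mul c1
  have h2 := hq.const_mul c2
  have h3 := hu.const_mul c3
  have h4 := hv.const_mul c4
  rw [intervalIntegral.integral_sub ((h1.sub h2).add h3) h4,
      intervalIntegral.integral_add (h1.sub h2) h3,
      intervalIntegral.integral_sub h1 h2,
      intervalIntegral.integral_const_mul, intervalIntegral.integral_const_mul,
      intervalIntegral.integral_const_mul, intervalIntegral.integral_const_mul]

/-- With `-1 < γ1 < 0`, a uniform price increase `r > 0` shifts the composition
of aggregate demand toward product 1. -/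
theorem uniform_increase_shifts_composition (a b γ0 γ1 p1 p2 lo hi r : ℝ)
    (f : ℝ → ℝ) (hb : 0 < b) (hγ1 : -1 < γ1) (hγ1' : γ1 < 0) (hlo : lo < hi)
    (hfc : ContinuousOn f (Set.Icc lo hi))
    (hfpos : ∀ μ ∈ Set.Icc lo hi, 0 < f μ)
    (hfint : ∫ x in lo..hi, f x = 1) (hr : 0 < r) :
    (∫ μ in lo..hi, s1r a b γ0 γ1 p1 p2 r μ * f μ)
        * (∫ μ in lo..hi, s2r a b γ0 γ1 p1 p2 0 μ * f μ)
      > (∫ μ in lo..hi, s1r a b γ0 γ1 p1 p2 0 μ * f μ)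
        * (∫ μ in lo..hi, s2r a b γ0 γ1 p1 p2 r μ * f μ) := by
  have hle : lo ≤ hi := hlo.le
  have huIcc : Set.uIcc lo hi = Set.Icc lo hi := Set.uIcc_of_le hle
  have hint1 : ∀ t : ℝ, IntervalIntegrable (fun μ => s1r a b γ0 γ1 p1 p2 t μ * f μ) volume lo hi := by
    intro t
    apply ContinuousOn.intervalIntegrable
    rw [huIcc]
    exact ((s1r_cont a b γ0 γ1 p1 p2 t).continuousOn).mul hfc
  have hint2 : ∀ t : ℝ, IntervalIntegrable (fun μ => s2r a b γ0 γ1 p1 p2 t μ * f μ) volume lo hi := by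
    intro t
    apply ContinuousOn.intervalIntegrable
    rw [huIcc]
    exact ((s2r_cont a b γ0 γ1 p1 p2 t).continuousOn).mul hfc
  set Igr := ∫ μ in lo..hi, s1r a b γ0 γ1 p1 p2 r μ * f μ with hIgr
  set Ig0 := ∫ μ in lo..hi, s1r a b γ0 γ1 p1 p2 0 μ * f μ with hIg0
  set Ih0 := ∫ μ in lo..hi, s2r a b γ0 γ1 p1 p2 0 μ * f μ with hIh0
  set Ihr := ∫ μ in lo..hi, s2r a b γ0 γ1 p1 p2 r μ * f μ with hIhr
  set φ : ℝ → ℝ := fun x =>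
      Ih0 * (s1r a b γ0 γ1 p1 p2 r x * f x) - Ihr * (s1r a b γ0 γ1 p1 p2 0 x * f x)
      + Igr * (s2r a b γ0 γ1 p1 p2 0 x * f x) - Ig0 * (s2r a b γ0 γ1 p1 p2 r x * f x)
    with hφ
  have hφint : IntervalIntegrable φ volume lo hi := by
    rw [hφ]
    exact ((((hint1 r).const_mul Ih0).sub ((hint1 0).const_mul Ihr)).add
      ((hint2 0).const_mul Igr)).sub ((hint2 r).const_mul Ig0)
  have hφval : ∫ x in lo..hi, φ x = 2 * (Igr * Ih0 - Ig0 * Ihr) := by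
    rw [hφ]
    rw [integral_combo (hint1 r) (hint1 0) (hint2 0) (hint2 r)]
    rw [← hIgr, ← hIg0, ← hIh0, ← hIhr]
    ring
  have hφpos : ∀ x ∈ Set.Ioo lo hi, 0 < φ x := by
    intro x hx
    have hx1 : lo < x := hx.1
    have hx2 : x < hi := hx.2
    have hxIcc : x ∈ Set.Icc lo hi := ⟨hx1.le, hx2.le⟩
    have hfx : 0 < f x := hfpos x hxIcc
    have hmono1 : Set.uIcc lo x ⊆ Set.uIcc lo hi := by
      rw [huIcc, Set.uIcc_of_le hx1.le]
      exact Set.Icc_subset_Icc le_rfl hx2.le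
    have hmono2 : Set.uIcc x hi ⊆ Set.uIcc lo hi := by
      rw [huIcc, Set.uIcc_of_le hx2.le]
      exact Set.Icc_subset_Icc hx1.le le_rfl
    have hψint : ∀ c d : ℝ, Set.uIcc c d ⊆ Set.uIcc lo hi →
        IntervalIntegrable (fun y =>
          (s1r a b γ0 γ1 p1 p2 r x * f x) * (s2r a b γ0 γ1 p1 p2 0 y * f y)
          - (s1r a b γ0 γ1 p1 p2 0 x * f x) * (s2r a b γ0 γ1 p1 p2 r y * f y)
          + (s2r a b γ0 γ1 p1 p2 0 x * f x) * (s1r a b γ0 γ1 p1 p2 r y * f y)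
          - (s2r a b γ0 γ1 p1 p2 r x * f x) * (s1r a b γ0 γ1 p1 p2 0 y * f y)) volume c d := by
      intro c d h
      exact (((((hint2 0).mono_set h).const_mul _).sub
        (((hint2 r).mono_set h).const_mul _)).add
        (((hint1 r).mono_set h).const_mul _)).sub (((hint1 0).mono_set h).const_mul _)
    have key : φ x = ∫ y in lo..hi,
        ((s1r a b γ0 γ1 p1 p2 r x * f x) * (s2r a b γ0 γ1 p1 p2 0 y * f y)
          - (s1r a b γ0 γ1 p1 p2 0 x * f x) * (s2r a b γ0 γ1 p1 p2 r y * f y)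
          + (s2r a b γ0 γ1 p1 p2 0 x * f x) * (s1r a b γ0 γ1 p1 p2 r y * f y)
          - (s2r a b γ0 γ1 p1 p2 r x * f x) * (s1r a b γ0 γ1 p1 p2 0 y * f y)) := by
      rw [integral_combo (hint2 0) (hint2 r) (hint1 r) (hint1 0), hφ]
      rw [← hIgr, ← hIg0, ← hIh0, ← hIhr]
      ring
    have pos1 : 0 < ∫ y in lo..x,
        ((s1r a b γ0 γ1 p1 p2 r x * f x) * (s2r a b γ0 γ1 p1 p2 0 y * f y)
          - (s1r a b γ0 γ1 p1 p2 0 x * f x) * (s2r a b γ0 γ1 p1 p2 r y * f y)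
          + (s2r a b γ0 γ1 p1 p2 0 x * f x) * (s1r a b γ0 γ1 p1 p2 r y * f y)
          - (s2r a b γ0 γ1 p1 p2 r x * f x) * (s1r a b γ0 γ1 p1 p2 0 y * f y)) := by
      apply intervalIntegral.intervalIntegral_pos_of_pos_on (hψint lo x hmono1) _ hx1
      intro y hy
      have hfy : 0 < f y := hfpos y ⟨hy.1.le, (hy.2.trans hx2).le⟩
      have hk := ksym_pos a b γ0 γ1 p1 p2 r y x hb hγ1 hγ1' hr hy.2
      nlinarith [mul_pos hfx hfy]
    have pos2 : 0 < ∫ y in x..hi,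
        ((s1r a b γ0 γ1 p1 p2 r x * f x) * (s2r a b γ0 γ1 p1 p2 0 y * f y)
          - (s1r a b γ0 γ1 p1 p2 0 x * f x) * (s2r a b γ0 γ1 p1 p2 r y * f y)
          + (s2r a b γ0 γ1 p1 p2 0 x * f x) * (s1r a b γ0 γ1 p1 p2 r y * f y)
          - (s2r a b γ0 γ1 p1 p2 r x * f x) * (s1r a b γ0 γ1 p1 p2 0 y * f y)) := by
      apply intervalIntegral.intervalIntegral_pos_of_pos_on (hψint x hi hmono2) _ hx2
      intro y hy
      have hfy : 0 < f y := hfpos y ⟨(hx1.trans hy.1).le, hy.2.le⟩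
      have hk := ksym_pos a b γ0 γ1 p1 p2 r x y hb hγ1 hγ1' hr hy.1
      nlinarith [mul_pos hfx hfy]
    rw [key, ← intervalIntegral.integral_add_adjacent_intervals (hψint lo x hmono1) (hψint x hi hmono2)]
    linarith
  have hpos := intervalIntegral.intervalIntegral_pos_of_pos_on hφint hφpos hlo
  rw [hφval] at hpos
  show Igr * Ih0 > Ig0 * Ihr
  linarith
end
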